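/- arXiv:math/0608386 — 3 statements merged into one kernel-verified Lean document; each statement's English description precedes it below -/
import Mathlib

section
/- For the degenerate Hénon map φ_{a,0}(x,y) = (y, a + y²) with a near -2, the unstable set of the fixed point p⁺_{a,0} = (y⁺_{a,0}, y⁺_{a,0}) equals the half-parabola { (x, x² + a) : x ≥ a }. (In particular, it is contained in the image of φ_{a,0}, which is the full parabola { (x, x² + a) : x ∈ ℝ }.) -/
open Filter Topology

/-- The degenerate Hénon map `φ_{a,0}(x,y) = (y, a + y²)`. -/
noncomputable def phiDeg (a : ℝ) (p : ℝ × ℝ) : ℝ × ℝ := (p.2, a + p.2 ^ 2)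

/-- The unstable set of a point `q₀` for `φ_{a,0}`: points `q` admitting a backward
orbit `(q_n)` with `q₀ = q`, `φ_{a,0}(q_{n+1}) = q_n` and `q_n → q₀`. -/
def unstableSet (a : ℝ) (q₀ : ℝ × ℝ) : Set (ℝ × ℝ) :=
  {q | ∃ s : ℕ → ℝ × ℝ, s 0 = q ∧ (∀ n, phiDeg a (s (n + 1)) = s n) ∧
    Tendsto s atTop (𝓝 q₀)}

/-- Backward iteration of the parabola coordinate: `x_{n+1} = √(x_n - a)`. -/
noncomputable def seqX (a x0 : ℝ) : ℕ → ℝ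
  | 0 => x0
  | n + 1 => Real.sqrt (seqX a x0 n - a)

lemma seqX_ge (a x0 : ℝ) (hx0 : a ≤ x0) (ha : a < 0) : ∀ n, a ≤ seqX a x0 n
  | 0 => hx0
  | n + 1 => le_trans ha.le (Real.sqrt_nonneg _)

lemma seqX_sq (a x0 : ℝ) (hx0 : a ≤ x0) (ha : a < 0) (n : ℕ) :
    seqX a x0 (n + 1) ^ 2 = seqX a x0 n - a :=
  Real.sq_sqrt (sub_nonneg.mpr (seqX_ge a x0 hx0 ha n))

lemma sqrt_lip {u v : ℝ} (hu : 1 ≤ u) (hv : 1 ≤ v) :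
    |Real.sqrt u - Real.sqrt v| ≤ |u - v| / 2 := by
  have hu0 : (0:ℝ) ≤ u := by linarith
  have hv0 : (0:ℝ) ≤ v := by linarith
  have hsu : 1 ≤ Real.sqrt u := by
    rw [show (1:ℝ) = Real.sqrt 1 by simp]; exact Real.sqrt_le_sqrt hu
  have hsv : 1 ≤ Real.sqrt v := by
    rw [show (1:ℝ) = Real.sqrt 1 by simp]; exact Real.sqrt_le_sqrt hv
  have hmul : (Real.sqrt u - Real.sqrt v) * (Real.sqrt u + Real.sqrt v) = u - v := by
    have h1 := Real.sq_sqrt hu0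
    have h2 := Real.sq_sqrt hv0
    nlinarith
  have hpos := abs_of_nonneg (show (0:ℝ) ≤ Real.sqrt u + Real.sqrt v by linarith)
  have habs : |Real.sqrt u - Real.sqrt v| * (Real.sqrt u + Real.sqrt v) = |u - v| := by
    rw [← hmul, abs_mul, hpos]
  nlinarith [abs_nonneg (Real.sqrt u - Real.sqrt v)]

/-- For `a < 1/4` close to `-2` (so that `y⁺ > 1`), the unstable set of the fixed
point `p⁺_{a,0} = (y⁺,y⁺)` of `φ_{a,0}` equals the half-parabola
`{(x, x² + a) : x ≥ a}`; in particular it is contained in the image of `φ_{a,0}`. -/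
theorem unstable_set_degenerate_henon (a : ℝ) (ha : a < 1 / 4)
    (hnear : |a + 2| < 1) (hy : 1 < (1 + Real.sqrt (1 - 4 * a)) / 2) :
    unstableSet a ((1 + Real.sqrt (1 - 4 * a)) / 2, (1 + Real.sqrt (1 - 4 * a)) / 2)
        = {q : ℝ × ℝ | ∃ x : ℝ, a ≤ x ∧ q = (x, x ^ 2 + a)} ∧
    unstableSet a ((1 + Real.sqrt (1 - 4 * a)) / 2, (1 + Real.sqrt (1 - 4 * a)) / 2)
        ⊆ Set.range (phiDeg a) := by
  set y : ℝ := (1 + Real.sqrt (1 - 4 * a)) / 2 with hydef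
  obtain ⟨hn1, hn2⟩ := abs_lt.mp hnear
  have ha1 : a < -1 := by linarith
  have h4a : (0:ℝ) ≤ 1 - 4 * a := by linarith
  have hr : Real.sqrt (1 - 4 * a) ^ 2 = 1 - 4 * a := Real.sq_sqrt h4a
  have hyfix : y ^ 2 = y - a := by
    have : y = (1 + Real.sqrt (1 - 4 * a)) / 2 := hydef
    nlinarith [hr]
  have hrange : unstableSet a (y, y) ⊆ Set.range (phiDeg a) := by
    rintro q ⟨s, hs0, hstep, -⟩
    exact ⟨s 1, by rw [hstep 0, hs0]⟩
  constructor
  · ext q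
    constructor
    · rintro ⟨s, hs0, hstep, -⟩
      refine ⟨(s 1).2, ?_, ?_⟩
      · have h1 : s 1 = phiDeg a (s 2) := (hstep 1).symm
        have : (s 1).2 = a + (s 2).2 ^ 2 := by rw [h1]; rfl
        nlinarith [sq_nonneg (s 2).2]
      · have h0 : s 0 = phiDeg a (s 1) := (hstep 0).symm
        rw [← hs0, h0, phiDeg]
        exact Prod.ext rfl (by ring)
    · rintro ⟨x, hx, rfl⟩
      refine ⟨fun n => (seqX a x n, a + (seqX a x n) ^ 2), ?_, ?_, ?_⟩
      · simp [seqX]; ring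
      · intro n
        have h := seqX_sq a x hx (by linarith) n
        simp only [phiDeg]
        have h2 : a + seqX a x (n + 1) ^ 2 = seqX a x n := by rw [h]; ring
        rw [h2]
      · -- convergence
        have hy1 : 1 < y := hy
        have hyeq : y = Real.sqrt (y - a) := by
          rw [show y - a = y ^ 2 from hyfix.symm, Real.sqrt_sq (by linarith)]
        have hcontr : ∀ n, |seqX a x (n + 2) - y| ≤ |seqX a x (n + 1) - y| / 2 := by
          intro n
          have hge : 0 ≤ seqX a x (n + 1) := Real.sqrt_nonneg _
          have hu : 1 ≤ seqX a x (n + 1) - a := by linarith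
          have hv : 1 ≤ y - a := by linarith
          have := sqrt_lip hu hv
          rw [show seqX a x (n+1) - a - (y - a) = seqX a x (n+1) - y by ring] at this
          calc |seqX a x (n + 2) - y|
              = |Real.sqrt (seqX a x (n + 1) - a) - Real.sqrt (y - a)| := by
                rw [← hyeq]; rfl
            _ ≤ |seqX a x (n + 1) - y| / 2 := this
        have hgeo : ∀ n, |seqX a x (n + 1) - y| ≤ |seqX a x 1 - y| * (1 / 2) ^ n := by
          intro n
          induction n with
          | zero => simp
          | succ m ih =>
              calc |seqX a x (m + 2) - y| ≤ |seqX a x (m + 1) - y| / 2 := hcontr m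
                _ ≤ (|seqX a x 1 - y| * (1 / 2) ^ m) / 2 := by linarith
                _ = |seqX a x 1 - y| * (1 / 2) ^ (m + 1) := by ring
        have htend0 : Tendsto (fun n => |seqX a x (n + 1) - y|) atTop (𝓝 0) := by
          refine squeeze_zero (fun n => abs_nonneg _) hgeo ?_
          have := tendsto_pow_atTop_nhds_zero_of_lt_one (by norm_num : (0:ℝ) ≤ 1/2)
            (by norm_num : (1:ℝ)/2 < 1)
          simpa using this.const_mul |seqX a x 1 - y|
        have htend1 : Tendsto (fun n => seqX a x (n + 1)) atTop (𝓝 y) := by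
          rw [tendsto_iff_dist_tendsto_zero]
          simpa [Real.dist_eq] using htend0
        have htend : Tendsto (seqX a x) atTop (𝓝 y) :=
          (tendsto_add_atTop_iff_nat 1).mp htend1
        have hcont : Tendsto (fun n => a + (seqX a x n) ^ 2) atTop (𝓝 (a + y ^ 2)) := by
          exact (tendsto_const_nhds.add (htend.pow 2))
        have : a + y ^ 2 = y := by linarith [hyfix]
        rw [this] at hcont
        exact htend.prodMk_nhds hcont
  · exact hrange
end

section
/- Coordinate-change invariance of the cubic generic-unfolding condition: let Φ_{u,v}(x,y) = (β_{u,v}(x,y), y·γ_{u,v}(x,y)) be a family of C⁴ diffeomorphisms of the plane fixing the x-axis as a set, with Φ_{0,0}(0,0) = (0,0), b := ∂_x β_{0,0}(0,0) ≠ 0, c := γ_{0,0}(0,0) ≠ 0. If the family of graphs y = y_{u,v}(x) (with y_{0,0} having a cubic tangency with the x-axis at 0, i.e. value, first and second derivatives vanish at 0) has coefficients a₁ = ∂_u y, a₂ = ∂_v y, a₃ = ∂_{ux} y, a₄ = ∂_{vx} y at (0,0,0), then the image curves, written as graphs ỹ_{u,v}(x̃) in the new coordinates, satisfy ∂_u ỹ·∂_{vx̃}ỹ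 - ∂_v ỹ·∂_{ux̃}ỹ = (c²/b)(a₁a₄ - a₂a₃) at the origin. Hence the generic condition a₁a₄ - a₂a₃ ≠ 0 is preserved. -/
open Filter Topology

/-- `a₁ = ∂_u f(0,0,0)` for a family `f u v x`. -/
noncomputable def coeffA1 (f : ℝ → ℝ → ℝ → ℝ) : ℝ := deriv (fun u => f u 0 0) 0
/-- `a₂ = ∂_v f(0,0,0)`. -/
noncomputable def coeffA2 (f : ℝ → ℝ → ℝ → ℝ) : ℝ := deriv (fun v => f 0 v 0) 0
/-- `a₃ = ∂_{ux} f(0,0,0)`. -/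
noncomputable def coeffA3 (f : ℝ → ℝ → ℝ → ℝ) : ℝ :=
  deriv (fun u => deriv (fun x => f u 0 x) 0) 0
/-- `a₄ = ∂_{vx} f(0,0,0)`. -/
noncomputable def coeffA4 (f : ℝ → ℝ → ℝ → ℝ) : ℝ :=
  deriv (fun v => deriv (fun x => f 0 v x) 0) 0

/-!
In each one-parameter slice (`v = 0` or `u = 0`) the new curve is
`ỹ(s, x̃) = y(s, δ(s, x̃)) · g(s, x̃)`. Since `y(0, ·)` vanishes to third order at `0`, the
reparametrisation `δ` leaves `∂ₛy` unchanged and multiplies `∂ₛₓy` by `∂ₓδ(0)`; the multiplier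
`g` multiplies `∂ₛy` by `c = g(0)` and `∂ₛₓy` by `c` up to the term `∂ₓg(0) · ∂ₛy`, which cancels
in `a₁a₄ - a₂a₃`. So the determinant is scaled by `c² · ∂ₓδ(0)`, and `∂ₓδ(0) = 1/b` by
differentiating `δ ∘ β = id` along the `x`-axis, where the tangency kills the `∂_y β` term.
-/

noncomputable def paramDeriv (h : ℝ → ℝ → ℝ) : ℝ := deriv (fun s => h s 0) 0

noncomputable def xDeriv (h : ℝ → ℝ → ℝ) : ℝ → ℝ → ℝ := fun s x => deriv (h s) x

section
variable {h g δ : ℝ → ℝ → ℝ}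

theorem hasDerivAt_uncurry_comp {t φ' : ℝ} {φ : ℝ → ℝ}
    (hh : DifferentiableAt ℝ ↿h (t, φ t)) (hφ : HasDerivAt φ φ' t) :
    HasDerivAt (fun s => h s (φ s)) (deriv (fun s => h s (φ t)) t + deriv (h t) (φ t) * φ') t := by
  have hfst : HasDerivAt (fun s => h s (φ t)) (fderiv ℝ ↿h (t, φ t) (1, 0)) t :=
    hh.hasFDerivAt.comp_hasDerivAt (f := fun s => (s, φ t)) t
      ((hasDerivAt_id t).prodMk (hasDerivAt_const t (φ t)))
  have hsnd : HasDerivAt (h t) (fderiv ℝ ↿h (t, φ t) (0, 1)) (φ t) :=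
    hh.hasFDerivAt.comp_hasDerivAt (φ t) ((hasDerivAt_const _ t).prodMk (hasDerivAt_id _))
  have hdecomp : ((1 : ℝ), φ') = ((1 : ℝ), (0 : ℝ)) + φ' • ((0 : ℝ), (1 : ℝ)) := by simp
  rw [hfst.deriv, hsnd.deriv, mul_comm, ← smul_eq_mul, ← map_smul, ← map_add, ← hdecomp]
  exact hh.hasFDerivAt.comp_hasDerivAt t ((hasDerivAt_id t).prodMk hφ)

theorem hasDerivAt_uncurry_comp_of_hasDerivAt_zero {t : ℝ} {φ : ℝ → ℝ}
    (hh : DifferentiableAt ℝ ↿h (t, φ t)) (hφ : HasDerivAt φ 0 t) :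
    HasDerivAt (fun s => h s (φ s)) (deriv (fun s => h s (φ t)) t) t := by
  simpa only [mul_zero, add_zero] using hasDerivAt_uncurry_comp hh hφ

theorem Differentiable.uncurry_comp (hh : Differentiable ℝ ↿h) (hδ : Differentiable ℝ ↿δ) :
    Differentiable ℝ ↿(fun s x => h s (δ s x)) :=
  hh.comp (differentiable_fst.prodMk hδ)

theorem ContDiff.uncurry_comp {n : WithTop ℕ∞} (hh : ContDiff ℝ n ↿h) (hδ : ContDiff ℝ n ↿δ) :
    ContDiff ℝ n ↿(fun s x => h s (δ s x)) :=
  hh.comp (contDiff_fst.prodMk hδ)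

theorem Differentiable.uncurry_mul (hh : Differentiable ℝ ↿h) (hg : Differentiable ℝ ↿g) :
    Differentiable ℝ ↿(fun s x => h s x * g s x) :=
  hh.mul hg

theorem ContDiff.uncurry_xDeriv {n : WithTop ℕ∞} (hh : ContDiff ℝ (n + 1) ↿h) :
    ContDiff ℝ n ↿(xDeriv h) :=
  ContDiff.fderiv_apply (f := fun p : ℝ × ℝ => h p.1)
    (hh.comp (contDiff_fst.fst.prodMk contDiff_snd)) contDiff_snd contDiff_const le_rfl

theorem Differentiable.hasDerivAt_xDeriv (hh : Differentiable ℝ ↿h) (s x : ℝ) :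
    HasDerivAt (h s) (xDeriv h s x) x :=
  (hh.comp (differentiable_const s |>.prodMk differentiable_id) x).hasDerivAt

theorem xDeriv_mul (hh : Differentiable ℝ ↿h) (hg : Differentiable ℝ ↿g) :
    xDeriv (fun s x => h s x * g s x) = fun s x => xDeriv h s x * g s x + h s x * xDeriv g s x :=
  funext₂ fun s x => ((hh.hasDerivAt_xDeriv s x).mul (hg.hasDerivAt_xDeriv s x)).deriv

theorem xDeriv_comp (hh : Differentiable ℝ ↿h) (hδ : Differentiable ℝ ↿δ) :
    xDeriv (fun s x => h s (δ s x)) = fun s x => xDeriv h s (δ s x) * xDeriv δ s x :=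
  funext₂ fun s x => ((hh.hasDerivAt_xDeriv s (δ s x)).comp x (hδ.hasDerivAt_xDeriv s x)).deriv

theorem Differentiable.hasDerivAt_paramDeriv (hh : Differentiable ℝ ↿h) :
    HasDerivAt (fun s => h s 0) (paramDeriv h) 0 :=
  (hh.comp (differentiable_id.prodMk (differentiable_const 0)) 0).hasDerivAt

theorem paramDeriv_add (hh : Differentiable ℝ ↿h) (hg : Differentiable ℝ ↿g) :
    paramDeriv (fun s x => h s x + g s x) = paramDeriv h + paramDeriv g :=
  (hh.hasDerivAt_paramDeriv.add hg.hasDerivAt_paramDeriv).deriv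

theorem paramDeriv_mul (hh : Differentiable ℝ ↿h) (hg : Differentiable ℝ ↿g) :
    paramDeriv (fun s x => h s x * g s x) = paramDeriv h * g 0 0 + h 0 0 * paramDeriv g :=
  (hh.hasDerivAt_paramDeriv.mul hg.hasDerivAt_paramDeriv).deriv

theorem paramDeriv_comp (hh : Differentiable ℝ ↿h) (hδ : Differentiable ℝ ↿δ) (hδ0 : δ 0 0 = 0) :
    paramDeriv (fun s x => h s (δ s x)) = paramDeriv h + xDeriv h 0 0 * paramDeriv δ := by
  have := hasDerivAt_uncurry_comp (φ := fun s => δ s 0) (hh (0, δ 0 0)) hδ.hasDerivAt_paramDeriv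
  rw [hδ0] at this
  exact this.deriv

theorem paramDeriv_xDeriv_mul (hh : ContDiff ℝ 2 ↿h) (hg : ContDiff ℝ 2 ↿g) :
    paramDeriv (xDeriv (fun s x => h s x * g s x)) =
      paramDeriv (xDeriv h) * g 0 0 + xDeriv h 0 0 * paramDeriv g +
        paramDeriv h * xDeriv g 0 0 + h 0 0 * paramDeriv (xDeriv g) := by
  have hh' := hh.differentiable two_ne_zero
  have hg' := hg.differentiable two_ne_zero
  have hxh := (hh.uncurry_xDeriv (n := 1)).differentiable one_ne_zero
  have hxg := (hg.uncurry_xDeriv (n := 1)).differentiable one_ne_zero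
  rw [xDeriv_mul hh' hg', paramDeriv_add (hxh.uncurry_mul hg') (hh'.uncurry_mul hxg),
    paramDeriv_mul hxh hg', paramDeriv_mul hh' hxg]
  ring

theorem paramDeriv_xDeriv_comp (hh : ContDiff ℝ 2 ↿h) (hδ : ContDiff ℝ 2 ↿δ) (hδ0 : δ 0 0 = 0) :
    paramDeriv (xDeriv (fun s x => h s (δ s x))) =
      (paramDeriv (xDeriv h) + xDeriv (xDeriv h) 0 0 * paramDeriv δ) * xDeriv δ 0 0 +
        xDeriv h 0 0 * paramDeriv (xDeriv δ) := by
  have hh' := hh.differentiable two_ne_zero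
  have hδ' := hδ.differentiable two_ne_zero
  have hxh := (hh.uncurry_xDeriv (n := 1)).differentiable one_ne_zero
  have hxδ := (hδ.uncurry_xDeriv (n := 1)).differentiable one_ne_zero
  rw [xDeriv_comp hh' hδ', paramDeriv_mul (hxh.uncurry_comp hδ') hxδ,
    paramDeriv_comp hxh hδ' hδ0, hδ0]

theorem unfoldingCoeffs_of_cubicTangency (hh : ContDiff ℝ 2 ↿h) (hδ : ContDiff ℝ 2 ↿δ)
    (hg : ContDiff ℝ 2 ↿g) (h0 : h 0 0 = 0) (h1 : deriv (h 0) 0 = 0)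
    (h2 : deriv (deriv (h 0)) 0 = 0) (hδ0 : δ 0 0 = 0) :
    paramDeriv (fun s x => h s (δ s x) * g s x) = g 0 0 * paramDeriv h ∧
      paramDeriv (xDeriv (fun s x => h s (δ s x) * g s x)) =
        g 0 0 * xDeriv δ 0 0 * paramDeriv (xDeriv h) + xDeriv g 0 0 * paramDeriv h := by
  replace h1 : xDeriv h 0 0 = 0 := h1
  replace h2 : xDeriv (xDeriv h) 0 0 = 0 := h2
  have hh' := hh.differentiable two_ne_zero
  have hδ' := hδ.differentiable two_ne_zero
  have hw := hh.uncurry_comp hδ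
  have hw' := hw.differentiable two_ne_zero
  have hw0 : h 0 (δ 0 0) = 0 := by rw [hδ0, h0]
  have hw1 : xDeriv (fun s x => h s (δ s x)) 0 0 = 0 := by
    simp only [xDeriv_comp hh' hδ', hδ0, h1, zero_mul]
  have hwparam : paramDeriv (fun s x => h s (δ s x)) = paramDeriv h := by
    rw [paramDeriv_comp hh' hδ' hδ0, h1, zero_mul, add_zero]
  constructor
  · rw [paramDeriv_mul hw' (hg.differentiable two_ne_zero), hwparam, hw0]
    ring
  · rw [paramDeriv_xDeriv_mul hw hg, paramDeriv_xDeriv_comp hh hδ hδ0, hwparam, hw0, hw1, h1, h2]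
    ring

end

theorem deriv_mul_deriv_eq_one_of_leftInverse {φ ψ : ℝ → ℝ} {a : ℝ}
    (hψ : DifferentiableAt ℝ ψ (φ a)) (hφ : DifferentiableAt ℝ φ a)
    (hinv : ∀ᶠ x in 𝓝 a, ψ (φ x) = x) : deriv ψ (φ a) * deriv φ a = 1 := by
  rw [← deriv_comp a hψ hφ, EventuallyEq.deriv_eq (f₁ := ψ ∘ φ) (f := id) hinv, deriv_id]

theorem deriv_mul_deriv_eq_one_of_leftInverse_of_tangent {B : ℝ → ℝ → ℝ} {y ψ : ℝ → ℝ}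
    (hB : DifferentiableAt ℝ ↿B (0, 0)) (hy : HasDerivAt y 0 0) (hψ : DifferentiableAt ℝ ψ 0)
    (hB0 : B 0 0 = 0) (hy0 : y 0 = 0) (hinv : ∀ᶠ x in 𝓝 0, ψ (B x (y x)) = x) :
    deriv ψ 0 * deriv (fun x => B x 0) 0 = 1 := by
  have hBy := hasDerivAt_uncurry_comp_of_hasDerivAt_zero (by rwa [hy0]) hy
  have := deriv_mul_deriv_eq_one_of_leftInverse (φ := fun x => B x (y x))
    (by rwa [hy0, hB0]) hBy.differentiableAt hinv
  rwa [hBy.deriv, hy0, hB0] at this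

section
variable {f : ℝ → ℝ → ℝ → ℝ} {n : WithTop ℕ∞}

theorem ContDiff.uncurry_fix_fst (hf : ContDiff ℝ n ↿f) (c : ℝ) :
    ContDiff ℝ n ↿(fun s x => f c s x) :=
  hf.comp (contDiff_const.prodMk contDiff_id)

theorem ContDiff.uncurry_fix_snd (hf : ContDiff ℝ n ↿f) (c : ℝ) :
    ContDiff ℝ n ↿(fun s x => f s c x) :=
  hf.comp (contDiff_fst.prodMk (contDiff_const.prodMk contDiff_snd))

end

noncomputable def unfoldingDet (f : ℝ → ℝ → ℝ → ℝ) : ℝ :=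
  coeffA1 f * coeffA4 f - coeffA2 f * coeffA3 f

theorem unfoldingDet_comp_mul {Y δ G : ℝ → ℝ → ℝ → ℝ} (hY : ContDiff ℝ 2 ↿Y)
    (hδ : ContDiff ℝ 2 ↿δ) (hG : ContDiff ℝ 2 ↿G) (hY0 : Y 0 0 0 = 0)
    (hY1 : deriv (Y 0 0) 0 = 0) (hY2 : deriv (deriv (Y 0 0)) 0 = 0) (hδ0 : δ 0 0 0 = 0) :
    unfoldingDet (fun u v x => Y u v (δ u v x) * G u v x) =
      G 0 0 0 ^ 2 * deriv (δ 0 0) 0 * unfoldingDet Y := by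
  obtain ⟨hA1, hA3⟩ := unfoldingCoeffs_of_cubicTangency (hY.uncurry_fix_snd 0)
    (hδ.uncurry_fix_snd 0) (hG.uncurry_fix_snd 0) hY0 hY1 hY2 hδ0
  obtain ⟨hA2, hA4⟩ := unfoldingCoeffs_of_cubicTangency (hY.uncurry_fix_fst 0)
    (hδ.uncurry_fix_fst 0) (hG.uncurry_fix_fst 0) hY0 hY1 hY2 hδ0
  -- `coeffA1`, `coeffA3` are by definition `paramDeriv`, `paramDeriv ∘ xDeriv` of the slice
  -- `fun s x => f s 0 x`, and `coeffA2`, `coeffA4` those of `fun s x => f 0 s x`.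
  have a1 : coeffA1 (fun u v x => Y u v (δ u v x) * G u v x) = G 0 0 0 * coeffA1 Y := hA1
  have a2 : coeffA2 (fun u v x => Y u v (δ u v x) * G u v x) = G 0 0 0 * coeffA2 Y := hA2
  have a3 : coeffA3 (fun u v x => Y u v (δ u v x) * G u v x) =
      G 0 0 0 * deriv (δ 0 0) 0 * coeffA3 Y + deriv (G 0 0) 0 * coeffA1 Y := hA3
  have a4 : coeffA4 (fun u v x => Y u v (δ u v x) * G u v x) =
      G 0 0 0 * deriv (δ 0 0) 0 * coeffA4 Y + deriv (G 0 0) 0 * coeffA2 Y := hA4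
  rw [unfoldingDet, unfoldingDet, a1, a2, a3, a4]
  ring

theorem cubic_generic_unfolding_coord_change_general
    (β γ : ℝ × ℝ → ℝ × ℝ → ℝ) (Y δ : ℝ → ℝ → ℝ → ℝ)
    (hβ : ContDiff ℝ 4 (fun q : (ℝ × ℝ) × (ℝ × ℝ) => β q.1 q.2))
    (hγ : ContDiff ℝ 4 (fun q : (ℝ × ℝ) × (ℝ × ℝ) => γ q.1 q.2))
    (hY : ContDiff ℝ 4 (fun p : ℝ × ℝ × ℝ => Y p.1 p.2.1 p.2.2))
    (hδ : ContDiff ℝ 4 (fun p : ℝ × ℝ × ℝ => δ p.1 p.2.1 p.2.2))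
    (hβ0 : β (0, 0) (0, 0) = 0)
    (hb : deriv (fun x => β (0, 0) (x, 0)) 0 ≠ 0)
    (hc : γ (0, 0) (0, 0) ≠ 0)
    (hY0 : Y 0 0 0 = 0)
    (hY1 : deriv (fun x => Y 0 0 x) 0 = 0)
    (hY2 : deriv (deriv (fun x => Y 0 0 x)) 0 = 0)
    (hδ0 : δ 0 0 0 = 0)
    (hinv1 : ∀ᶠ p : ℝ × ℝ × ℝ in 𝓝 0,
      δ p.1 p.2.1 (β (p.1, p.2.1) (p.2.2, Y p.1 p.2.1 p.2.2)) = p.2.2) :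
    (coeffA1 (fun u v xt => Y u v (δ u v xt) * γ (u, v) (δ u v xt, Y u v (δ u v xt))) *
       coeffA4 (fun u v xt => Y u v (δ u v xt) * γ (u, v) (δ u v xt, Y u v (δ u v xt))) -
     coeffA2 (fun u v xt => Y u v (δ u v xt) * γ (u, v) (δ u v xt, Y u v (δ u v xt))) *
       coeffA3 (fun u v xt => Y u v (δ u v xt) * γ (u, v) (δ u v xt, Y u v (δ u v xt))))
      = (γ (0, 0) (0, 0)) ^ 2 / deriv (fun x => β (0, 0) (x, 0)) 0 *
          (coeffA1 Y * coeffA4 Y - coeffA2 Y * coeffA3 Y) ∧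
    ((coeffA1 Y * coeffA4 Y - coeffA2 Y * coeffA3 Y ≠ 0) ↔
      (coeffA1 (fun u v xt => Y u v (δ u v xt) * γ (u, v) (δ u v xt, Y u v (δ u v xt))) *
         coeffA4 (fun u v xt => Y u v (δ u v xt) * γ (u, v) (δ u v xt, Y u v (δ u v xt))) -
       coeffA2 (fun u v xt => Y u v (δ u v xt) * γ (u, v) (δ u v xt, Y u v (δ u v xt))) *
         coeffA3 (fun u v xt => Y u v (δ u v xt) * γ (u, v) (δ u v xt, Y u v (δ u v xt))) ≠ 0)) := by
  set b := deriv (fun x => β (0, 0) (x, 0)) 0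
  have hG : ContDiff ℝ 4 ↿(fun u v x => γ (u, v) (δ u v x, Y u v (δ u v x))) :=
    hγ.comp ((contDiff_fst.prodMk contDiff_snd.fst).prodMk
      (hδ.prodMk (hY.comp (contDiff_fst.prodMk (contDiff_snd.fst.prodMk hδ)))))
  have hdet := unfoldingDet_comp_mul (hY.of_le (by norm_num)) (hδ.of_le (by norm_num))
    (hG.of_le (by norm_num)) hY0 hY1 hY2 hδ0
  have hxAxis : Tendsto (fun x : ℝ => ((0 : ℝ), (0 : ℝ), x)) (𝓝 0) (𝓝 0) :=
    (continuous_const.prodMk (continuous_const.prodMk continuous_id)).tendsto' 0 0 rfl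
  have hY' : Differentiable ℝ (Y 0 0) :=
    (hY.comp (contDiff_const.prodMk (contDiff_const.prodMk contDiff_id))).differentiable
      (by norm_num)
  have hδ' : Differentiable ℝ (δ 0 0) :=
    (hδ.comp (contDiff_const.prodMk (contDiff_const.prodMk contDiff_id))).differentiable
      (by norm_num)
  have hδb : deriv (δ 0 0) 0 * b = 1 :=
    deriv_mul_deriv_eq_one_of_leftInverse_of_tangent (B := fun x y => β (0, 0) (x, y))
      ((hβ.differentiable (by norm_num)).comp ((differentiable_const _).prodMk differentiable_id) _)
      ((hY' 0).hasDerivAt.congr_deriv hY1) (hδ' 0) hβ0 hY0 (hxAxis.eventually hinv1)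
  have hscale : unfoldingDet (fun u v xt => Y u v (δ u v xt) * γ (u, v) (δ u v xt, Y u v (δ u v xt)))
      = γ (0, 0) (0, 0) ^ 2 / b * unfoldingDet Y := by
    rw [hdet, eq_inv_of_mul_eq_one_left hδb, hδ0, hY0, div_eq_mul_inv]
  unfold unfoldingDet at hscale
  refine ⟨hscale, ?_⟩
  rw [hscale, mul_ne_zero_iff_left (div_ne_zero (pow_ne_zero 2 hc) hb)]

/-- Coordinate-change invariance of the cubic generic-unfolding condition: for a family
`Φ_{u,v}(x,y) = (β_{u,v}(x,y), y·γ_{u,v}(x,y))` of `C⁴` diffeomorphisms fixing the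
`x`-axis, with `Φ_{0,0}(0,0) = (0,0)`, `b = ∂_x β_{0,0}(0,0) ≠ 0`, `c = γ_{0,0}(0,0) ≠ 0`,
the image curves `ỹ_{u,v}(x̃) = y_{u,v}(x)·γ_{u,v}(x, y_{u,v}(x))` (where
`x̃ = β_{u,v}(x, y_{u,v}(x))` with local inverse `x = δ_{u,v}(x̃)`) satisfy
`∂_u ỹ·∂_{vx̃}ỹ - ∂_v ỹ·∂_{ux̃}ỹ = (c²/b)(a₁a₄ - a₂a₃)` at the origin; hence the
generic condition is preserved. -/
theorem cubic_generic_unfolding_coord_change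
    (β γ : ℝ × ℝ → ℝ × ℝ → ℝ) (Y δ : ℝ → ℝ → ℝ → ℝ)
    (hβ : ContDiff ℝ 4 (fun q : (ℝ × ℝ) × (ℝ × ℝ) => β q.1 q.2))
    (hγ : ContDiff ℝ 4 (fun q : (ℝ × ℝ) × (ℝ × ℝ) => γ q.1 q.2))
    (hY : ContDiff ℝ 4 (fun p : ℝ × ℝ × ℝ => Y p.1 p.2.1 p.2.2))
    (hδ : ContDiff ℝ 4 (fun p : ℝ × ℝ × ℝ => δ p.1 p.2.1 p.2.2))
    (hβ0 : β (0, 0) (0, 0) = 0)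
    (hb : deriv (fun x => β (0, 0) (x, 0)) 0 ≠ 0)
    (hc : γ (0, 0) (0, 0) ≠ 0)
    (hY0 : Y 0 0 0 = 0)
    (hY1 : deriv (fun x => Y 0 0 x) 0 = 0)
    (hY2 : deriv (deriv (fun x => Y 0 0 x)) 0 = 0)
    (hδ0 : δ 0 0 0 = 0)
    (hinv1 : ∀ᶠ p : ℝ × ℝ × ℝ in 𝓝 0,
      δ p.1 p.2.1 (β (p.1, p.2.1) (p.2.2, Y p.1 p.2.1 p.2.2)) = p.2.2)
    (hinv2 : ∀ᶠ p : ℝ × ℝ × ℝ in 𝓝 0,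
      β (p.1, p.2.1) (δ p.1 p.2.1 p.2.2, Y p.1 p.2.1 (δ p.1 p.2.1 p.2.2)) = p.2.2) :
    (coeffA1 (fun u v xt => Y u v (δ u v xt) * γ (u, v) (δ u v xt, Y u v (δ u v xt))) *
       coeffA4 (fun u v xt => Y u v (δ u v xt) * γ (u, v) (δ u v xt, Y u v (δ u v xt))) -
     coeffA2 (fun u v xt => Y u v (δ u v xt) * γ (u, v) (δ u v xt, Y u v (δ u v xt))) *
       coeffA3 (fun u v xt => Y u v (δ u v xt) * γ (u, v) (δ u v xt, Y u v (δ u v xt))))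
      = (γ (0, 0) (0, 0)) ^ 2 / deriv (fun x => β (0, 0) (x, 0)) 0 *
          (coeffA1 Y * coeffA4 Y - coeffA2 Y * coeffA3 Y) ∧
    ((coeffA1 Y * coeffA4 Y - coeffA2 Y * coeffA3 Y ≠ 0) ↔
      (coeffA1 (fun u v xt => Y u v (δ u v xt) * γ (u, v) (δ u v xt, Y u v (δ u v xt))) *
         coeffA4 (fun u v xt => Y u v (δ u v xt) * γ (u, v) (δ u v xt, Y u v (δ u v xt))) -
       coeffA2 (fun u v xt => Y u v (δ u v xt) * γ (u, v) (δ u v xt, Y u v (δ u v xt))) *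
         coeffA3 (fun u v xt => Y u v (δ u v xt) * γ (u, v) (δ u v xt, Y u v (δ u v xt))) ≠ 0)) :=
  cubic_generic_unfolding_coord_change_general β γ Y δ hβ hγ hY hδ hβ0 hb hc hY0 hY1 hY2 hδ0 hinv1
end

section
/- Sufficient criterion for generic unfolding of a cubic tangency (Lemma on cubic tangencies): let ρ_{u,v}(t) = (x_{u,v}(t), y_{u,v}(t)) be a two-parameter family of C⁴ regular plane curves, C⁴ in (u,v,t), satisfying: (i) x_{0,0}(0)=0, y_{0,0}(0)=ẏ_{0,0}(0)=ÿ_{0,0}(0)=0, y⃛_{0,0}(0) ≠ 0; (ii) there is a C² function t_{u,v} with t_{0,0}=0 and ÿ_{u,v}(t_{u,v})=0; (iii) there is a C² function v(u) with v(0)=0 and ẏ_{u,v(u)}(t_{u,v(u)})=0; (iv) (∂_u y_{u,v(u)})(0)|_{u=0} ≠ 0 and (∂_v ẏ_{0,v})(0)|_{v=0} ≠ 0. Then, after the reparametrization (u,w) with w = v - v(u), the Taylor coefficients a₁ = ∂_u ŷ(0), a₃ = ∂_{ut} ŷ(0), a₄ = ∂_{wt} ŷ(0) of ŷ_{u,w}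 := y_{u,w+v(u)} satisfy a₁ ≠ 0, a₃ = 0 and a₄ ≠ 0; in particular a₁a₄ - a₂a₃ = a₁a₄ ≠ 0. -/
open Filter Topology

/-!
Along the curve `u ↦ (u, v(u))` the slope `∂ₜy` vanishes at the inflection parameter
`τ(u) = t_{u,v(u)}`, so the derivative of `u ↦ ∂ₜy_{u,v(u)}(τ(u))` at `0` is zero. By the chain
rule it equals `a₃ + τ'(0) · ÿ_{0,0}(0)`, and `ÿ_{0,0}(0) = 0`; hence `a₃ = 0`.
-/

section

variable {𝕜 E F : Type*} [NontriviallyNormedField 𝕜] [NormedAddCommGroup E] [NormedSpace 𝕜 E]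
  [NormedAddCommGroup F] [NormedSpace 𝕜 F]

protected theorem ContDiff.deriv {m n : WithTop ℕ∞} {f : E → 𝕜 → F} {g : E → 𝕜}
    (hf : ContDiff 𝕜 m (Function.uncurry f)) (hg : ContDiff 𝕜 n g) (hnm : n + 1 ≤ m) :
    ContDiff 𝕜 n fun x => deriv (f x) (g x) :=
  (hf.fderiv hg hnm).clm_apply contDiff_const

theorem deriv_comp_graph {f : 𝕜 × 𝕜 → E} {g : 𝕜 → 𝕜} {a : 𝕜}
    (hf : DifferentiableAt 𝕜 f (a, g a)) (hg : DifferentiableAt 𝕜 g a) :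
    deriv (fun u => f (u, g u)) a =
      deriv (fun u => f (u, g a)) a + deriv g a • deriv (fun t => f (a, t)) (g a) := by
  set L := fderiv 𝕜 f (a, g a)
  have hgraph : deriv (fun u => f (u, g u)) a = L (1, deriv g a) :=
    (hf.hasFDerivAt.comp_hasDerivAt a ((hasDerivAt_id a).prodMk hg.hasDerivAt)).deriv
  have hfst : deriv (fun u => f (u, g a)) a = L (1, 0) :=
    (hf.hasFDerivAt.comp_hasDerivAt a ((hasDerivAt_id a).prodMk (hasDerivAt_const a _))).deriv
  have hsnd : deriv (fun t => f (a, t)) (g a) = L (0, 1) :=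
    (hf.hasFDerivAt.comp_hasDerivAt (g a)
      ((hasDerivAt_const (g a) a).prodMk (hasDerivAt_id (g a)))).deriv
  have hsplit : ((1 : 𝕜), deriv g a) = (1, 0) + deriv g a • (0, 1) := by
    simp
  rw [hgraph, hfst, hsnd, hsplit, map_add, map_smul]

theorem deriv_fst_eq_zero_of_eventually_graph_eq_zero {f : 𝕜 × 𝕜 → E} {g : 𝕜 → 𝕜} {a : 𝕜}
    (hf : DifferentiableAt 𝕜 f (a, g a)) (hg : DifferentiableAt 𝕜 g a)
    (hfg : ∀ᶠ u in 𝓝 a, f (u, g u) = 0) (hsnd : deriv (fun t => f (a, t)) (g a) = 0) :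
    deriv (fun u => f (u, g a)) a = 0 := by
  have hgraph : deriv (fun u => f (u, g u)) a = 0 := by
    rw [(show (fun u => f (u, g u)) =ᶠ[𝓝 a] fun _ => 0 from hfg).deriv_eq, deriv_const]
  rwa [deriv_comp_graph hf hg, hsnd, smul_zero, add_zero] at hgraph

end

theorem cubic_tangency_criterion_general (y : ℝ → ℝ → ℝ → ℝ) (T : ℝ → ℝ → ℝ) (V : ℝ → ℝ)
    (hy : ContDiff ℝ 4 (fun p : ℝ × ℝ × ℝ => y p.1 p.2.1 p.2.2))
    (hy2 : deriv (deriv (fun t => y 0 0 t)) 0 = 0)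
    (hT : ContDiff ℝ 2 (fun p : ℝ × ℝ => T p.1 p.2)) (hT0 : T 0 0 = 0)
    (hV : ContDiff ℝ 2 V) (hV0 : V 0 = 0)
    (hVslope : ∀ᶠ u in 𝓝 (0 : ℝ), deriv (fun t => y u (V u) t) (T u (V u)) = 0)
    (ha1 : deriv (fun u => y u (V u) 0) 0 ≠ 0)
    (ha4 : deriv (fun v => deriv (fun t => y 0 v t) 0) 0 ≠ 0) :
    deriv (fun u => y u (V u) 0) 0 ≠ 0 ∧
    deriv (fun u => deriv (fun t => y u (V u) t) 0) 0 = 0 ∧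
    deriv (fun w => deriv (fun t => y 0 (w + V 0) t) 0) 0 ≠ 0 ∧
    deriv (fun u => y u (V u) 0) 0 *
      deriv (fun w => deriv (fun t => y 0 (w + V 0) t) 0) 0 ≠ 0 := by
  have ha4' : deriv (fun w => deriv (fun t => y 0 (w + V 0) t) 0) 0 ≠ 0 := by
    simpa only [hV0, add_zero] using ha4
  have hslope : ContDiff ℝ 1 fun q : ℝ × ℝ => deriv (fun t => y q.1 (V q.1) t) q.2 :=
    ContDiff.deriv (f := fun q t => y q.1 (V q.1) t)
      ((hy.of_le (by norm_num)).comp (contDiff_fst.fst.prodMk ((hV.comp contDiff_fst.fst).prodMk contDiff_snd)))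
      contDiff_snd le_rfl
  have hτ : ContDiff ℝ 2 fun u => T u (V u) := hT.comp (contDiff_id.prodMk hV)
  have hτ0 : T 0 (V 0) = 0 := by rw [hV0, hT0]
  have ha3 := deriv_fst_eq_zero_of_eventually_graph_eq_zero
    (f := fun q : ℝ × ℝ => deriv (fun t => y q.1 (V q.1) t) q.2) (g := fun u => T u (V u))
    (hslope.differentiable one_ne_zero _) (hτ.differentiable (by norm_num) _) hVslope
    (by simpa only [hV0, hT0] using hy2)
  simp only [hτ0] at ha3
  exact ⟨ha1, ha3, ha4', mul_ne_zero ha1 ha4'⟩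

/-- Sufficient criterion for generic unfolding of a cubic tangency: for a two-parameter
family of `C⁴` regular plane curves `ρ_{u,v}(t) = (x_{u,v}(t), y_{u,v}(t))` satisfying
(i) a cubic tangency of `ρ_{0,0}` with the `x`-axis at `t = 0`, (ii) a `C²` continuation
`t_{u,v}` of inflection parameters, (iii) a `C²` function `v(u)` killing the slope at the
inflection point, and (iv) the two nondegeneracy conditions, the Taylor coefficients of
`ŷ_{u,w} = y_{u,w+v(u)}` satisfy `a₁ ≠ 0`, `a₃ = 0`, `a₄ ≠ 0`, so `a₁a₄ - a₂a₃ = a₁a₄ ≠ 0`. -/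
theorem cubic_tangency_criterion (x y : ℝ → ℝ → ℝ → ℝ) (T : ℝ → ℝ → ℝ) (V : ℝ → ℝ)
    (hx : ContDiff ℝ 4 (fun p : ℝ × ℝ × ℝ => x p.1 p.2.1 p.2.2))
    (hy : ContDiff ℝ 4 (fun p : ℝ × ℝ × ℝ => y p.1 p.2.1 p.2.2))
    (hreg : ∀ᶠ p : ℝ × ℝ × ℝ in 𝓝 0,
      ((deriv (fun t => x p.1 p.2.1 t) p.2.2, deriv (fun t => y p.1 p.2.1 t) p.2.2) : ℝ × ℝ)
        ≠ (0, 0))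
    (hx0 : x 0 0 0 = 0)
    (hy0 : y 0 0 0 = 0)
    (hy1 : deriv (fun t => y 0 0 t) 0 = 0)
    (hy2 : deriv (deriv (fun t => y 0 0 t)) 0 = 0)
    (hy3 : deriv (deriv (deriv (fun t => y 0 0 t))) 0 ≠ 0)
    (hT : ContDiff ℝ 2 (fun p : ℝ × ℝ => T p.1 p.2)) (hT0 : T 0 0 = 0)
    (hTinfl : ∀ᶠ p : ℝ × ℝ in 𝓝 0,
      deriv (deriv (fun t => y p.1 p.2 t)) (T p.1 p.2) = 0)
    (hV : ContDiff ℝ 2 V) (hV0 : V 0 = 0)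
    (hVslope : ∀ᶠ u in 𝓝 (0 : ℝ), deriv (fun t => y u (V u) t) (T u (V u)) = 0)
    (ha1 : deriv (fun u => y u (V u) 0) 0 ≠ 0)
    (ha4 : deriv (fun v => deriv (fun t => y 0 v t) 0) 0 ≠ 0) :
    deriv (fun u => y u (V u) 0) 0 ≠ 0 ∧
    deriv (fun u => deriv (fun t => y u (V u) t) 0) 0 = 0 ∧
    deriv (fun w => deriv (fun t => y 0 (w + V 0) t) 0) 0 ≠ 0 ∧
    deriv (fun u => y u (V u) 0) 0 *
      deriv (fun w => deriv (fun t => y 0 (w + V 0) t) 0) 0 ≠ 0 :=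
  cubic_tangency_criterion_general y T V hy hy2 hT hT0 hV hV0 hVslope ha1 ha4
end
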